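/- arXiv:2101.00486 — 2 statements merged into one kernel-verified Lean document; each statement's English description precedes it below -/
import Mathlib

section
/- Let v = (v_0,...,v_{2k}) ∈ ℝ^{2k+1} with v_0 > 0 be a singular sequence of rank r ≤ k whose Hankel matrix A_v is positive semidefinite, and let (φ_0,...,φ_{r-1}) := A_v(r-1)^{-1}(v_r,...,v_{2r-1})^T. Then the recursion v_j = φ_0 v_{j-r} + ... + φ_{r-1} v_{j-1} holds for all j = r, ..., 2k-1. -/
open Matrix MeasureTheory

noncomputable section

/-- The `(k+1) × (k+1)` Hankel matrix `A_v = (v_{i+j})_{i,j=0}^k`. -/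
def hankel (k : ℕ) (v : ℕ → ℝ) : Matrix (Fin (k+1)) (Fin (k+1)) ℝ :=
  Matrix.of fun i j => v (i.1 + j.1)

/-- The top-left `r × r` corner `A_v(r-1) = (v_{i+j})_{i,j=0}^{r-1}`. -/
def hcorner (v : ℕ → ℝ) (r : ℕ) : Matrix (Fin r) (Fin r) ℝ :=
  Matrix.of fun i j => v (i.1 + j.1)

/-- The `(j+1)`-th column of the Hankel matrix `A_v`. -/
def hcol (k : ℕ) (v : ℕ → ℝ) (j : ℕ) : Fin (k+1) → ℝ :=
  fun i => v (i.1 + j)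

/-- `r = rank v`: column `v_r` lies in the span of the preceding columns, and `r`
is minimal with this property. -/
def seqRank (k : ℕ) (v : ℕ → ℝ) (r : ℕ) : Prop :=
  hcol k v r ∈ Submodule.span ℝ (hcol k v '' {j | j < r}) ∧
  ∀ i < r, hcol k v i ∉ Submodule.span ℝ (hcol k v '' {j | j < i})

/-- `φ = A_v(r-1)⁻¹ (v_r,…,v_{2r-1})ᵀ`. -/
def phi (v : ℕ → ℝ) (r : ℕ) : Fin r → ℝ :=
  (hcorner v r)⁻¹.mulVec fun i => v (r + i.1)

/-! Let `L` be the linear functional on `ℝ[X]` with `L (X ^ n) = v n`, so that `A_v` is the Gram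
matrix of `(f, g) ↦ L (f * g)` on polynomials of degree `≤ k`. The rank condition gives a monic `q`
of degree `r` with `L (X ^ m * q) = 0` for `m ≤ k`. Semidefiniteness propagates this: if
`L (X ^ j * f) = 0` for `j ≤ deg f ≤ k`, then the coefficient vector of `f` is isotropic, hence in
the kernel of `A_v`, so `L (X ^ j * f) = 0` for all `j ≤ k`. Applied to `f = X ^ s * q` this
extends the vanishing to `m < 2k - r`. Minimality of `r` makes the first `r` columns independent,
so the corner `A_v(r-1)` is nonsingular (again by semidefiniteness), which forces
`q = X ^ r - ∑ i, φ i * X ^ i`. -/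

open Polynomial
open scoped ComplexOrder

theorem Matrix.PosSemidef.isUnit_det_submatrix {𝕜 m n : Type*} [RCLike 𝕜] [Fintype m] [Fintype n]
    [DecidableEq m] [DecidableEq n] {A : Matrix n n 𝕜} (hA : A.PosSemidef) (e : m ↪ n)
    (hcols : LinearIndependent 𝕜 fun i => A.col (e i)) : IsUnit (A.submatrix e e).det := by
  rw [isUnit_iff_ne_zero]
  intro hdet
  obtain ⟨x, hx0, hx⟩ := Matrix.exists_mulVec_eq_zero_iff.mpr hdet
  set y : n → 𝕜 := ∑ i, x i • Pi.single (e i) 1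
  have hAy : A *ᵥ y = ∑ i, x i • A.col (e i) := by
    simp [y, Matrix.mulVec_sum, Matrix.mulVec_smul]
  have hAy_e : ∀ i, (A *ᵥ y) (e i) = 0 := fun i => by
    rw [hAy]
    simpa [Finset.sum_apply, Matrix.mulVec, dotProduct, mul_comm] using congrFun hx i
  have hq : star y ⬝ᵥ A *ᵥ y = 0 := by
    simp [y, star_sum, sum_dotProduct, smul_dotProduct, hAy_e]
  have hker := (hA.dotProduct_mulVec_zero_iff y).mp hq
  exact hx0 (funext (Fintype.linearIndependent_iff.mp hcols x (hAy ▸ hker)))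

theorem linearIndepOn_Iio_of_notMem_span {K V : Type*} [DivisionRing K] [AddCommGroup V]
    [Module K V] {f : ℕ → V} {r : ℕ} (h : ∀ i < r, f i ∉ Submodule.span K (f '' Set.Iio i)) :
    LinearIndepOn K f (Set.Iio r) := by
  induction r with
  | zero => simp
  | succ r ih =>
    rw [Set.Iio_add_one_eq_Iic, ← Set.Iio_insert,
      linearIndepOn_insert Set.self_notMem_Iio]
    exact ⟨ih fun i hi => h i (by omega), h r (by omega)⟩

def rieszFunctional (v : ℕ → ℝ) : ℝ[X] →ₗ[ℝ] ℝ :=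
  lsum fun n => LinearMap.mulRight ℝ (v n)

theorem rieszFunctional_monomial (v : ℕ → ℝ) (n : ℕ) (a : ℝ) :
    rieszFunctional v (monomial n a) = a * v n := by
  simp [rieszFunctional, sum_monomial_index]

theorem rieszFunctional_C_mul_X_pow (v : ℕ → ℝ) (n : ℕ) (a : ℝ) :
    rieszFunctional v (C a * X ^ n) = a * v n := by
  rw [C_mul_X_pow_eq_monomial, rieszFunctional_monomial]

theorem rieszFunctional_X_pow (v : ℕ → ℝ) (n : ℕ) : rieszFunctional v (X ^ n) = v n := by
  simpa using rieszFunctional_C_mul_X_pow v n 1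

theorem hankel_mulVec_coeff {k : ℕ} (v : ℕ → ℝ) {f : ℝ[X]} (hf : f.natDegree ≤ k)
    (p : Fin (k + 1)) :
    (hankel k v *ᵥ fun i => f.coeff i) p = rieszFunctional v (X ^ p.1 * f) := by
  conv_rhs => rw [f.as_sum_range' (k + 1) (by omega)]
  simp only [Finset.mul_sum, map_sum, X_pow_mul_monomial, rieszFunctional_monomial]
  rw [← Fin.sum_univ_eq_sum_range]
  simp [Matrix.mulVec, dotProduct, hankel, mul_comm, add_comm]

theorem rieszFunctional_X_pow_mul_eq_zero_of_forall_le_natDegree {k : ℕ} {v : ℕ → ℝ}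
    (hpsd : (hankel k v).PosSemidef) {f : ℝ[X]} (hf : f.natDegree ≤ k)
    (h : ∀ j ≤ f.natDegree, rieszFunctional v (X ^ j * f) = 0) {p : ℕ} (hp : p ≤ k) :
    rieszFunctional v (X ^ p * f) = 0 := by
  have hq : star (fun i : Fin (k + 1) => f.coeff i) ⬝ᵥ hankel k v *ᵥ (fun i => f.coeff i) = 0 := by
    refine Finset.sum_eq_zero fun i _ => ?_
    rw [hankel_mulVec_coeff v hf]
    rcases le_or_gt i.1 f.natDegree with hi | hi
    · simp [h i hi]
    · simp [coeff_eq_zero_of_natDegree_lt hi]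
  have hp := congrFun ((hpsd.dotProduct_mulVec_zero_iff _).mp hq) ⟨p, by omega⟩
  rwa [hankel_mulVec_coeff v hf] at hp

theorem rieszFunctional_X_pow_mul_eq_zero_of_add_lt_two_mul {k d : ℕ} {v : ℕ → ℝ}
    (hpsd : (hankel k v).PosSemidef) {f : ℝ[X]} (hf : f.natDegree ≤ d)
    (h : ∀ m ≤ k, rieszFunctional v (X ^ m * f) = 0) (m : ℕ) (hm : m + d < 2 * k) :
    rieszFunctional v (X ^ m * f) = 0 := by
  induction m using Nat.strong_induction_on with
  | _ m ih =>
  rcases le_or_gt m k with hmk | hmk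
  · exact h m hmk
  obtain ⟨s, rfl⟩ : ∃ s, m = k + s := ⟨m - k, by omega⟩
  have hdeg : (X ^ s * f).natDegree ≤ s + d :=
    natDegree_mul_le.trans (add_le_add (natDegree_X_pow_le s) hf)
  have hk := rieszFunctional_X_pow_mul_eq_zero_of_forall_le_natDegree hpsd
    (hdeg.trans (by omega)) (p := k) (fun j hj => ?_) le_rfl
  · rwa [← mul_assoc, ← pow_add] at hk
  rw [← mul_assoc, ← pow_add]
  exact ih _ (by omega) (by omega)

def recurrencePoly {r : ℕ} (c : Fin r → ℝ) : ℝ[X] :=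
  X ^ r - ∑ i, C (c i) * X ^ (i : ℕ)

theorem natDegree_recurrencePoly_le {r : ℕ} (c : Fin r → ℝ) :
    (recurrencePoly c).natDegree ≤ r :=
  (natDegree_sub_le_of_le (natDegree_X_pow_le r) (natDegree_sum_le_of_forall_le _ _
    fun (i : Fin r) _ => (natDegree_C_mul_X_pow_le (c i) i).trans i.2.le)).trans (max_self r).le

theorem rieszFunctional_X_pow_mul_recurrencePoly (v : ℕ → ℝ) {r : ℕ} (c : Fin r → ℝ) (m : ℕ) :
    rieszFunctional v (X ^ m * recurrencePoly c) = v (m + r) - ∑ i, c i * v (m + i) := by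
  simp only [recurrencePoly, mul_sub, Finset.mul_sum, mul_left_comm _ (C _), ← pow_add, map_sub,
    map_sum, rieszFunctional_X_pow, rieszFunctional_C_mul_X_pow]

theorem exists_recurrencePoly_of_hcol_mem_span {k r : ℕ} {v : ℕ → ℝ}
    (h : hcol k v r ∈ Submodule.span ℝ (hcol k v '' {j | j < r})) :
    ∃ c : Fin r → ℝ, ∀ m ≤ k, rieszFunctional v (X ^ m * recurrencePoly c) = 0 := by
  rw [show {j | j < r} = Set.range ((↑) : Fin r → ℕ) from Fin.range_val.symm, ← Set.range_comp,
    Submodule.mem_span_range_iff_exists_fun] at h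
  obtain ⟨c, hc⟩ := h
  refine ⟨c, fun m hm => ?_⟩
  have hm := congrFun hc ⟨m, by omega⟩
  simp only [Finset.sum_apply, Pi.smul_apply, Function.comp_apply, hcol, smul_eq_mul] at hm
  rw [rieszFunctional_X_pow_mul_recurrencePoly, ← hm, sub_self]

theorem isUnit_det_hcorner {k r : ℕ} {v : ℕ → ℝ} (hpsd : (hankel k v).PosSemidef)
    (hr : r ≤ k + 1) (h : ∀ i < r, hcol k v i ∉ Submodule.span ℝ (hcol k v '' {j | j < i})) :
    IsUnit (hcorner v r).det := by
  have hli := (linearIndepOn_Iio_of_notMem_span h).comp (fun i : Fin r => ⟨i.1, i.2⟩)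
    fun i j hij => Fin.ext (congrArg Subtype.val hij)
  exact hpsd.isUnit_det_submatrix (Fin.castLEEmb hr) hli

theorem phi_eq_of_recurrencePoly {r : ℕ} {v : ℕ → ℝ} (hunit : IsUnit (hcorner v r).det)
    {c : Fin r → ℝ} (h : ∀ m < r, rieszFunctional v (X ^ m * recurrencePoly c) = 0) :
    phi v r = c := by
  have hc : hcorner v r *ᵥ c = fun i : Fin r => v (r + i) := by
    funext i
    have hi := h i i.2
    rw [rieszFunctional_X_pow_mul_recurrencePoly, sub_eq_zero] at hi
    simp only [Matrix.mulVec, dotProduct, hcorner, Matrix.of_apply]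
    rw [add_comm r, hi]
    simp only [mul_comm]
  rw [phi, ← hc, Matrix.mulVec_mulVec, Matrix.nonsing_inv_mul _ hunit, Matrix.one_mulVec]

theorem stmt1_general (k r : ℕ) (v : ℕ → ℝ)
    (hpsd : (hankel k v).PosSemidef)
    (hr : r ≤ k) (hrank : seqRank k v r) :
    ∀ j, r ≤ j → j + 1 ≤ 2*k →
      v j = ∑ i : Fin r, phi v r i * v (j - r + i.1) := by
  obtain ⟨c, hc⟩ := exists_recurrencePoly_of_hcol_mem_span hrank.1
  have hphi : phi v r = c :=
    phi_eq_of_recurrencePoly (isUnit_det_hcorner hpsd (by omega) hrank.2)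
      fun m hm => hc m (by omega)
  intro j hrj hj
  have hrec := rieszFunctional_X_pow_mul_eq_zero_of_add_lt_two_mul hpsd
    (natDegree_recurrencePoly_le c) hc (j - r) (by omega)
  rw [rieszFunctional_X_pow_mul_recurrencePoly, Nat.sub_add_cancel hrj, sub_eq_zero] at hrec
  rw [hphi, hrec]

theorem stmt1 (k r : ℕ) (v : ℕ → ℝ) (hv0 : 0 < v 0)
    (hpsd : (hankel k v).PosSemidef) (hsing : (hankel k v).det = 0)
    (hr : r ≤ k) (hrank : seqRank k v r) :
    ∀ j, r ≤ j → j + 1 ≤ 2*k →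
      v j = ∑ i : Fin r, phi v r i * v (j - r + i.1) :=
  stmt1_general k r v hpsd hr hrank
end
end

section
/- Let v = (v_0,...,v_{2k}) ∈ ℝ^{2k+1} be a singular sequence (its Hankel matrix A_v is singular) that is positively recursively generated with coefficients φ_0,...,φ_{r-1} (r = rank v) satisfying φ_0 ≠ 0. Then v is negatively recursively generated with coefficients ψ_j = −φ_{j+1}/φ_0 for j = 0,...,r−2 and ψ_{r-1} = 1/φ_0; in particular v is recursively generated. -/
/-! Write `H_m = (v_{m+a+b})_{a,b<r}`. The forward recurrence says `H_{m+1} = H_m T` for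
the companion matrix `T` of `φ`, hence `H_{2q} = (T^q)ᵀ H_0 T^q`. Since `φ_0 ≠ 0`, `T` is
invertible, so the positive definiteness of `H_0` passes by congruence to the bottom-right
window `H_{2k-2r+2}`. The backward recurrence is the forward one solved for its `φ_0`-term. -/

open Matrix MeasureTheory

noncomputable section

section

variable {R : Type*}

def hankelWindow (v : ℕ → R) (r m : ℕ) : Matrix (Fin r) (Fin r) R :=
  Matrix.of fun a b => v (m + a.1 + b.1)

lemma hankelWindow_transpose (v : ℕ → R) (r m : ℕ) :
    (hankelWindow v r m)ᵀ = hankelWindow v r m := by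
  ext a b
  simp only [hankelWindow, transpose_apply, of_apply, add_right_comm]

variable [CommSemiring R]

/-- Companion matrix of the recurrence `x_{j+r} = ∑ i, φ i * x_{j+i}`, in the orientation
acting on Hankel windows from the right. -/
def companion {r : ℕ} (φ : Fin r → R) : Matrix (Fin r) (Fin r) R :=
  Matrix.of fun c b => if b.1 + 1 = r then φ c else if c.1 = b.1 + 1 then 1 else 0

lemma hankelWindow_succ {r N m : ℕ} {v : ℕ → R} {φ : Fin r → R}
    (hrec : ∀ j, j + r ≤ N → v (j + r) = ∑ i, φ i * v (j + i)) (hm : m + 2 * r ≤ N + 1) :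
    hankelWindow v r (m + 1) = hankelWindow v r m * companion φ := by
  ext a b
  simp only [hankelWindow, companion, mul_apply, of_apply]
  by_cases hb : b.1 + 1 = r
  · simp only [hb, if_true]
    rw [show m + 1 + a.1 + b.1 = m + a.1 + r by omega, hrec _ (by omega)]
    exact Finset.sum_congr rfl fun c _ => mul_comm _ _
  · rw [Finset.sum_eq_single ⟨b.1 + 1, by omega⟩]
    · simp only [hb, if_false, if_true, mul_one]
      congr 1; omega
    · intro c _ hc
      have : c.1 ≠ b.1 + 1 := fun h => hc (Fin.ext h)
      simp [hb, this]
    · simp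

lemma hankelWindow_add {r N : ℕ} {v : ℕ → R} {φ : Fin r → R}
    (hrec : ∀ j, j + r ≤ N → v (j + r) = ∑ i, φ i * v (j + i)) (m : ℕ) :
    ∀ n, m + n + 2 * r ≤ N + 2 →
      hankelWindow v r (m + n) = hankelWindow v r m * companion φ ^ n
  | 0, _ => by simp
  | n + 1, hn => by
    rw [← add_assoc, hankelWindow_succ hrec (by omega), hankelWindow_add hrec m n (by omega),
      pow_succ, Matrix.mul_assoc]

lemma hankelWindow_add_self {r N q : ℕ} {v : ℕ → R} {φ : Fin r → R}
    (hrec : ∀ j, j + r ≤ N → v (j + r) = ∑ i, φ i * v (j + i)) (hq : q + q + 2 * r ≤ N + 2) :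
    hankelWindow v r (q + q) = (companion φ ^ q)ᵀ * hankelWindow v r 0 * companion φ ^ q := by
  have hq' : hankelWindow v r q = hankelWindow v r 0 * companion φ ^ q := by
    simpa using hankelWindow_add hrec 0 q (by omega)
  rw [hankelWindow_add hrec q q hq, ← hankelWindow_transpose v r q, hq', transpose_mul,
    hankelWindow_transpose]

end

section

variable {K : Type*} [Field K]

lemma companion_mulVec_injective {n : ℕ} {φ : Fin (n + 1) → K} (hφ0 : φ 0 ≠ 0) :
    Function.Injective (companion φ).mulVec := by
  rw [← coe_mulVecLin, injective_iff_map_eq_zero]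
  intro x hx
  have hne (i : Fin n) : (i : ℕ) ≠ n := i.isLt.ne
  have row (c : Fin (n + 1)) :
      φ c * x (Fin.last n) + ∑ i : Fin n, (if c.1 = i.1 + 1 then x i.castSucc else 0) = 0 := by
    simpa [mulVec, dotProduct, Fin.sum_univ_castSucc, companion, add_comm, hne]
      using congrFun hx c
  have hlast : x (Fin.last n) = 0 := by simpa [hφ0] using row 0
  ext c
  induction c using Fin.lastCases with
  | last => exact hlast
  | cast i => simpa [hlast, Fin.val_inj] using row i.succ

lemma backward_recurrence {n N m : ℕ} {v : ℕ → K} {φ : Fin (n + 1) → K}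
    (hrec : ∀ j, j + (n + 1) ≤ N → v (j + (n + 1)) = ∑ i, φ i * v (j + i)) (hφ0 : φ 0 ≠ 0)
    (hm : m + (n + 1) ≤ N) :
    v m = ∑ i : Fin (n + 1),
      (if h : i.1 + 1 < n + 1 then -φ ⟨i.1 + 1, h⟩ / φ 0 else 1 / φ 0) * v (m + 1 + i) := by
  have hfwd := hrec m hm
  rw [Fin.sum_univ_succ] at hfwd
  simp only [Fin.val_zero, add_zero, Fin.val_succ, ← add_assoc, add_right_comm m _ 1] at hfwd
  have hshift : ∑ i : Fin n, -φ ⟨i.1 + 1, by omega⟩ / φ 0 * v (m + 1 + i)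
      = -(∑ i : Fin n, φ i.succ * v (m + 1 + i)) / φ 0 := by
    rw [← Finset.sum_neg_distrib, Finset.sum_div]
    exact Finset.sum_congr rfl fun i _ =>
      show -φ i.succ / φ 0 * _ = -(φ i.succ * _) / φ 0 by ring
  simp only [Fin.sum_univ_castSucc, Fin.val_castSucc, Fin.val_last, lt_irrefl, dif_neg,
    not_false_eq_true, add_lt_add_iff_right, Fin.is_lt, dif_pos, hshift]
  rw [hfwd]
  field_simp
  ring

end

lemma hankelWindow_add_self_posDef {n N q : ℕ} {v : ℕ → ℝ} {φ : Fin (n + 1) → ℝ}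
    (hrec : ∀ j, j + (n + 1) ≤ N → v (j + (n + 1)) = ∑ i, φ i * v (j + i)) (hφ0 : φ 0 ≠ 0)
    (hq : q + q + 2 * (n + 1) ≤ N + 2) (hpd : (hankelWindow v (n + 1) 0).PosDef) :
    (hankelWindow v (n + 1) (q + q)).PosDef := by
  have hunit : IsUnit (companion φ) :=
    mulVec_injective_iff_isUnit.1 (companion_mulVec_injective hφ0)
  rw [hankelWindow_add_self hrec hq, ← conjTranspose_eq_transpose_of_trivial]
  exact hpd.conjTranspose_mul_mul_same (mulVec_injective_iff_isUnit.2 (hunit.pow q))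

theorem stmt5_general (k r : ℕ) (v : ℕ → ℝ)
    (hr0 : 0 < r) (hr : r ≤ k)
    (hpd : (hcorner v r).PosDef)
    (hprg : ∀ j, r ≤ j → j ≤ 2*k → v j = ∑ i : Fin r, phi v r i * v (j - r + i.1))
    (hphi0 : phi v r ⟨0, hr0⟩ ≠ 0) :
    (Matrix.of fun a b : Fin r => v (2*k - 2*r + 2 + a.1 + b.1)).PosDef ∧
    ∀ j, j + r ≤ 2*k →
      v (2*k - r - j) =
        ∑ i : Fin r,
          (if h : i.1 + 1 < r then -(phi v r ⟨i.1 + 1, h⟩) / phi v r ⟨0, hr0⟩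
           else 1 / phi v r ⟨0, hr0⟩) * v (2*k - r + 1 - j + i.1) := by
  obtain ⟨n, rfl⟩ : ∃ n, r = n + 1 := ⟨r - 1, by omega⟩
  have hrec (j : ℕ) (hj : j + (n + 1) ≤ 2 * k) :
      v (j + (n + 1)) = ∑ i, phi v (n + 1) i * v (j + i) := by
    simpa using hprg (j + (n + 1)) (by omega) hj
  refine ⟨?_, fun j hj => ?_⟩
  · have hcorner_eq : hcorner v (n + 1) = hankelWindow v (n + 1) 0 := by
      ext; simp [hankelWindow, hcorner]
    change (hankelWindow v (n + 1) (2 * k - 2 * (n + 1) + 2)).PosDef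
    rw [show 2 * k - 2 * (n + 1) + 2 = (k - n) + (k - n) by omega]
    exact hankelWindow_add_self_posDef hrec hphi0 (by omega) (hcorner_eq ▸ hpd)
  · rw [show 2 * k - (n + 1) + 1 - j = 2 * k - (n + 1) - j + 1 by omega]
    exact backward_recurrence hrec hphi0 (by omega)

theorem stmt5 (k r : ℕ) (v : ℕ → ℝ) (hsing : (hankel k v).det = 0)
    (hr0 : 0 < r) (hr : r ≤ k) (hrank : seqRank k v r)
    (hpd : (hcorner v r).PosDef)
    (hprg : ∀ j, r ≤ j → j ≤ 2*k → v j = ∑ i : Fin r, phi v r i * v (j - r + i.1))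
    (hphi0 : phi v r ⟨0, hr0⟩ ≠ 0) :
    (Matrix.of fun a b : Fin r => v (2*k - 2*r + 2 + a.1 + b.1)).PosDef ∧
    ∀ j, j + r ≤ 2*k →
      v (2*k - r - j) =
        ∑ i : Fin r,
          (if h : i.1 + 1 < r then -(phi v r ⟨i.1 + 1, h⟩) / phi v r ⟨0, hr0⟩
           else 1 / phi v r ⟨0, hr0⟩) * v (2*k - r + 1 - j + i.1) :=
  stmt5_general k r v hr0 hr hpd hprg hphi0
end
end
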